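/- arXiv:0901.2468 — 4 statements merged into one kernel-verified Lean document; each statement's English description precedes it below -/
import Mathlib

section
/- If X and X' are i.i.d. real random variables with x^{1+2α} · P(|X X'| ≥ √(x log x)) → 0 as x → ∞ for some α > 0, then E[|X X'|^{2+4α} / (1 + log⁺|X X'|)^{4+4α}] < ∞. -/
/-!
Cut the range of `|Y|` into the shells `a m ≤ |Y| < a (m + 1)` with `a m = √(eᵐ m)`, the tail
thresholds at `x = eᵐ`. On the `m`-th shell the integrand is at most
`a (m + 1) ^ (2p) / (1 + log⁺ a m) ^ q ≈ eᵖᵐ m ^ (p - q)`, while the tail hypothesis gives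
`P (a m ≤ |Y|) ≲ e⁻ᵖᵐ`; the products are summable because `q - p > 1`.
-/

open MeasureTheory ProbabilityTheory Filter

section

open Real

noncomputable def sqrtMulLog (x : ℝ) : ℝ := √(x * log x)

lemma sqrtMulLog_exp (t : ℝ) : sqrtMulLog (exp t) = √(exp t * t) := by
  rw [sqrtMulLog, log_exp]

lemma sqrtMulLog_exp_rpow_two_mul {t : ℝ} (ht : 0 ≤ t) (p : ℝ) :
    sqrtMulLog (exp t) ^ (2 * p) = (exp t * t) ^ p := by
  rw [sqrtMulLog_exp, sqrt_eq_rpow, ← rpow_mul (by positivity)]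
  ring_nf

lemma natCast_le_sqrtMulLog_exp (m : ℕ) : (m : ℝ) ≤ sqrtMulLog (exp m) := by
  rw [sqrtMulLog_exp]
  apply le_sqrt_of_sq_le
  nlinarith [add_one_le_exp (m : ℝ), m.cast_nonneg (α := ℝ)]

lemma half_le_posLog_sqrtMulLog_exp (m : ℕ) : (m : ℝ) / 2 ≤ log⁺ (sqrtMulLog (exp m)) := by
  rcases Nat.eq_zero_or_pos m with rfl | hm
  · simp [posLog_nonneg]
  · have hm1 : (1 : ℝ) ≤ m := by exact_mod_cast hm
    rw [posLog_apply, sqrtMulLog_exp, log_sqrt (by positivity),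
      log_mul (exp_pos _).ne' (by positivity), log_exp]
    exact le_max_of_le_right (by linarith [log_nonneg hm1])

lemma rpow_div_one_add_posLog_rpow_le {r q a b y : ℝ} (hr : 0 ≤ r) (hq : 0 ≤ q) (ha : 0 ≤ a)
    (hay : a ≤ y) (hyb : y ≤ b) :
    y ^ r / (1 + log⁺ y) ^ q ≤ b ^ r / (1 + log⁺ a) ^ q := by
  have hy := ha.trans hay
  have hlog := posLog_nonneg (x := a)
  gcongr
  exact rpow_nonneg (hy.trans hyb) r

/-- Bounds the integrand on the shell `sqrtMulLog (exp m) ≤ y ≤ sqrtMulLog (exp (m + 1))`. -/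
noncomputable def shellCoeff (p q : ℝ) (m : ℕ) : ℝ :=
  sqrtMulLog (exp (m + 1)) ^ (2 * p) / (1 + log⁺ (sqrtMulLog (exp m))) ^ q

lemma shellCoeff_nonneg (p q : ℝ) (m : ℕ) : 0 ≤ shellCoeff p q m :=
  div_nonneg (rpow_nonneg (sqrt_nonneg _) _)
    (rpow_nonneg (add_nonneg zero_le_one posLog_nonneg) _)

lemma exists_shellCoeff_ge {p q y : ℝ} (hp : 0 ≤ p) (hq : 0 ≤ q) (hy : 0 ≤ y) :
    ∃ m : ℕ, sqrtMulLog (exp m) ≤ y ∧ y ^ (2 * p) / (1 + log⁺ y) ^ q ≤ shellCoeff p q m := by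
  obtain ⟨N, hN⟩ := exists_nat_gt y
  have hyN : y ∈ Set.Ico (sqrtMulLog (exp (0 : ℕ))) (sqrtMulLog (exp N)) :=
    ⟨by simpa [sqrtMulLog] using hy, hN.trans_le (natCast_le_sqrtMulLog_exp N)⟩
  obtain ⟨m, -, hm⟩ := Set.mem_iUnion₂.1
    (Ico_subset_biUnion_Ico N (fun m : ℕ => sqrtMulLog (exp m)) hyN)
  refine ⟨m, hm.1, ?_⟩
  rw [shellCoeff, ← Nat.cast_add_one]
  exact rpow_div_one_add_posLog_rpow_le (by positivity) hq (sqrt_nonneg _) hm.1 hm.2.le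

lemma shellCoeff_div_exp_rpow_le {p q : ℝ} (hq : 0 ≤ q) (m : ℕ) :
    shellCoeff p q m / exp m ^ p ≤ exp p * 2 ^ q * ((m : ℝ) + 1) ^ (p - q) := by
  have hm : (0 : ℝ) ≤ m := m.cast_nonneg
  have hden : ((m : ℝ) + 1) / 2 ≤ 1 + log⁺ (sqrtMulLog (exp m)) := by
    linarith [half_le_posLog_sqrtMulLog_exp m]
  calc shellCoeff p q m / exp m ^ p
      = (exp 1 * (m + 1)) ^ p / (1 + log⁺ (sqrtMulLog (exp m))) ^ q := by
        rw [shellCoeff, sqrtMulLog_exp_rpow_two_mul (by positivity), exp_add, mul_assoc,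
          mul_rpow (exp_pos _).le (by positivity), mul_rpow (exp_pos _).le (by positivity)]
        field_simp
    _ ≤ (exp 1 * (m + 1)) ^ p / (((m : ℝ) + 1) / 2) ^ q := by gcongr
    _ = exp p * 2 ^ q * ((m : ℝ) + 1) ^ (p - q) := by
        rw [mul_rpow (exp_pos _).le (by positivity), exp_one_rpow,
          div_rpow (by positivity) zero_le_two, rpow_sub (by positivity)]
        field_simp

variable {Ω : Type*} [MeasurableSpace Ω] {μ : Measure Ω}

lemma summable_shellCoeff_mul_measure {Y : Ω → ℝ} {p q C : ℝ} (hp : 0 ≤ p) (hpq : p + 1 < q)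
    (htail : ∀ᶠ x in atTop, x ^ p * (μ {ω | sqrtMulLog x ≤ |Y ω|}).toReal ≤ C) :
    Summable fun m : ℕ => shellCoeff p q m * (μ {ω | sqrtMulLog (exp m) ≤ |Y ω|}).toReal := by
  have hg : Summable fun m : ℕ => exp p * 2 ^ q * ((m : ℝ) + 1) ^ (p - q) * C := by
    refine Summable.mul_right _ (Summable.mul_left _ ?_)
    exact_mod_cast (summable_nat_add_iff 1).2 (summable_nat_rpow.2 (by linarith : p - q < -1))
  refine hg.of_norm_bounded_eventually_nat ?_
  filter_upwards [(tendsto_exp_atTop.comp tendsto_natCast_atTop_atTop).eventually htail]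
    with m hm
  have hexp : 0 < exp m ^ p := rpow_pos_of_pos (exp_pos _) p
  rw [norm_of_nonneg (mul_nonneg (shellCoeff_nonneg p q m) ENNReal.toReal_nonneg)]
  set P := (μ {ω | sqrtMulLog (exp m) ≤ |Y ω|}).toReal
  calc shellCoeff p q m * P = shellCoeff p q m / exp m ^ p * (exp m ^ p * P) := by
        field_simp
    _ ≤ exp p * 2 ^ q * ((m : ℝ) + 1) ^ (p - q) * C :=
        mul_le_mul (shellCoeff_div_exp_rpow_le (by linarith) m) hm (by positivity) (by positivity)

theorem integrable_rpow_div_one_add_posLog_rpow_of_tail [IsFiniteMeasure μ] {Y : Ω → ℝ}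
    (hY : Measurable Y) {p q C : ℝ} (hp : 0 ≤ p) (hpq : p + 1 < q)
    (htail : ∀ᶠ x in atTop, x ^ p * (μ {ω | sqrtMulLog x ≤ |Y ω|}).toReal ≤ C) :
    Integrable (fun ω => |Y ω| ^ (2 * p) / (1 + log⁺ |Y ω|) ^ q) μ := by
  set S : ℕ → Set Ω := fun m => {ω | sqrtMulLog (exp m) ≤ |Y ω|}
  have hS (m : ℕ) : MeasurableSet (S m) := measurableSet_le measurable_const hY.abs
  have hpt (ω : Ω) : ENNReal.ofReal (|Y ω| ^ (2 * p) / (1 + log⁺ |Y ω|) ^ q)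
      ≤ ∑' m, (S m).indicator (fun _ => ENNReal.ofReal (shellCoeff p q m)) ω := by
    obtain ⟨m, hmS, hm⟩ := exists_shellCoeff_ge hp (by linarith) (abs_nonneg (Y ω))
    calc _ ≤ ENNReal.ofReal (shellCoeff p q m) := ENNReal.ofReal_le_ofReal hm
      _ = (S m).indicator (fun _ => ENNReal.ofReal (shellCoeff p q m)) ω :=
        (Set.indicator_of_mem (show ω ∈ S m from hmS)
          (fun _ => ENNReal.ofReal (shellCoeff p q m))).symm
      _ ≤ _ := ENNReal.le_tsum m
  have hmeas : Measurable fun ω => |Y ω| ^ (2 * p) / (1 + log⁺ |Y ω|) ^ q := by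
    fun_prop
  refine ⟨hmeas.aestronglyMeasurable, ?_⟩
  rw [hasFiniteIntegral_iff_ofReal (ae_of_all _ fun ω => div_nonneg (rpow_nonneg (abs_nonneg _) _)
    (rpow_nonneg (add_nonneg zero_le_one posLog_nonneg) _))]
  calc ∫⁻ ω, ENNReal.ofReal (|Y ω| ^ (2 * p) / (1 + log⁺ |Y ω|) ^ q) ∂μ
      ≤ ∫⁻ ω, ∑' m, (S m).indicator (fun _ => ENNReal.ofReal (shellCoeff p q m)) ω ∂μ :=
        lintegral_mono hpt
    _ = ∑' m, ENNReal.ofReal (shellCoeff p q m) * μ (S m) := by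
        rw [lintegral_tsum fun m => (measurable_const.indicator (hS m)).aemeasurable]
        simp_rw [lintegral_indicator_const (hS _)]
    _ = ENNReal.ofReal (∑' m, shellCoeff p q m * (μ (S m)).toReal) := by
        rw [ENNReal.ofReal_tsum_of_nonneg
          (fun m => mul_nonneg (shellCoeff_nonneg p q m) ENNReal.toReal_nonneg)
          (summable_shellCoeff_mul_measure hp hpq htail)]
        congr 1 with m
        rw [ENNReal.ofReal_mul (shellCoeff_nonneg p q m),
          ENNReal.ofReal_toReal (measure_ne_top _ _)]
    _ < ⊤ := ENNReal.ofReal_lt_top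

end

theorem stmt_3_general {Ω : Type*} [MeasureSpace Ω] [IsProbabilityMeasure (ℙ : Measure Ω)]
    (X X' : Ω → ℝ) (hX : Measurable X) (hX' : Measurable X')
    (α : ℝ) (hα : 0 < α)
    (htail : Tendsto (fun x : ℝ =>
        x ^ (1 + 2 * α) * (ℙ {ω | Real.sqrt (x * Real.log x) ≤ |X ω * X' ω|}).toReal)
      atTop (nhds 0)) :
    Integrable (fun ω =>
      |X ω * X' ω| ^ (2 + 4 * α) / (1 + max (Real.log |X ω * X' ω|) 0) ^ (4 + 4 * α)) ℙ := by
  have h := integrable_rpow_div_one_add_posLog_rpow_of_tail (Y := fun ω => X ω * X' ω)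
    (p := 1 + 2 * α) (q := 4 + 4 * α) (hX.mul hX') (by linarith) (by linarith)
    (htail.eventually (eventually_le_nhds one_pos))
  convert h using 4 with ω
  · ring
  · rw [Real.posLog_apply, max_comm]

/-- Step toward Lemma 6.4: the tail decay condition on the product `X X'` implies
the truncated-moment finiteness for the product. -/
theorem stmt_3 {Ω : Type*} [MeasureSpace Ω] [IsProbabilityMeasure (ℙ : Measure Ω)]
    (X X' : Ω → ℝ) (hX : Measurable X) (hX' : Measurable X')
    (hindep : IndepFun X X' ℙ) (hid : Measure.map X ℙ = Measure.map X' ℙ)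
    (α : ℝ) (hα : 0 < α)
    (htail : Tendsto (fun x : ℝ =>
        x ^ (1 + 2 * α) * (ℙ {ω | Real.sqrt (x * Real.log x) ≤ |X ω * X' ω|}).toReal)
      atTop (nhds 0)) :
    Integrable (fun ω =>
      |X ω * X' ω| ^ (2 + 4 * α) / (1 + max (Real.log |X ω * X' ω|) 0) ^ (4 + 4 * α)) ℙ :=
  stmt_3_general X X' hX hX' α hα htail
end

section
/- Let X, X' be i.i.d. real random variables. If E[|X X'|^{2+4α} / (1 + log⁺|X X'|)^{4+4α}] < ∞ for some α > 0, then E[|X|^{2+4α} / (1 + log⁺|X|)^{4+4α}] < ∞. -/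
/-!
Write `w t = t ^ p / (1 + log⁺ t) ^ q` with `0 < p = 2 + 4α ≤ q = 4 + 4α`. Up to an additive
constant, `w` is supermultiplicative in the weak form
`w t * min s 1 ^ p ≤ exp (q / p - 1) ^ p + w (t * s)` for `t, s ≥ 0`. For `s ≤ 1` the
numerator scales by `s ^ p` while the denominator can only shrink; for `s ≥ 1` one uses that
`w` is increasing beyond `exp (q / p - 1)`, which reduces to the antitonicity of
`log x / x ^ r`.
With `t = |X|`, `s = |X'|` this makes `w |X| * min |X'| 1 ^ p` integrable, and by independence
its expectation is `E w |X| * E min |X'| 1 ^ p`, whose second factor is positive since `X'` has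
the law of `X`, which is not a.s. zero because `E X² = 1`.
-/

open MeasureTheory ProbabilityTheory Real Set

noncomputable def powLogWeight (p q t : ℝ) : ℝ := t ^ p / (1 + max (log t) 0) ^ q

section powLogWeight

variable {p q t s : ℝ}

lemma one_le_one_add_max_log_zero (t : ℝ) : 1 ≤ 1 + max (log t) 0 :=
  le_add_of_nonneg_right (le_max_right _ _)

lemma powLogWeight_nonneg (ht : 0 ≤ t) : 0 ≤ powLogWeight p q t :=
  div_nonneg (rpow_nonneg ht p) (rpow_nonneg (zero_le_one.trans (one_le_one_add_max_log_zero t)) q)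

lemma powLogWeight_le_rpow (hq : 0 ≤ q) (ht : 0 ≤ t) : powLogWeight p q t ≤ t ^ p :=
  div_le_self (rpow_nonneg ht p) (one_le_rpow (one_le_one_add_max_log_zero t) hq)

lemma measurable_powLogWeight : Measurable (powLogWeight p q) := by
  unfold powLogWeight; fun_prop

lemma rpow_mul_powLogWeight_le_powLogWeight_mul (hq : 0 ≤ q) (ht : 0 ≤ t) (hs0 : 0 ≤ s)
    (hs1 : s ≤ 1) : s ^ p * powLogWeight p q t ≤ powLogWeight p q (t * s) := by
  have hlog : max (log (t * s)) 0 ≤ max (log t) 0 := by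
    rw [max_comm, max_comm (log t)]
    exact posLog_le_posLog (mul_nonneg ht hs0) (mul_le_of_le_one_right ht hs1)
  have hpos : 0 < 1 + max (log (t * s)) 0 :=
    zero_lt_one.trans_le (one_le_one_add_max_log_zero _)
  rw [powLogWeight, powLogWeight, mul_rpow ht hs0, mul_div_assoc', mul_comm (s ^ p)]
  gcongr

lemma antitoneOn_one_add_log_div_rpow {r : ℝ} (hr : 0 < r) :
    AntitoneOn (fun t : ℝ => (1 + log t) / t ^ r) (Ici (exp (r⁻¹ - 1))) := by
  have hscale : ∀ x, 0 < x →
      (1 + log x) / x ^ r = exp r * (log (exp 1 * x) / (exp 1 * x) ^ r) := by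
    intro x hx
    rw [log_mul (exp_pos 1).ne' hx.ne', log_exp, mul_rpow (exp_pos 1).le hx.le, ← exp_mul,
      one_mul]
    field_simp
  have hmem : ∀ x ∈ Ici (exp (r⁻¹ - 1)), exp 1 * x ∈ Ici (exp r⁻¹) := fun x hx =>
    calc exp r⁻¹ = exp 1 * exp (r⁻¹ - 1) := by rw [← exp_add]; ring_nf
      _ ≤ exp 1 * x := by gcongr; exact hx
  intro t ht u hu htu
  have ht0 : 0 < t := (exp_pos _).trans_le ht
  dsimp only
  rw [hscale t ht0, hscale u (ht0.trans_le htu)]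
  gcongr 1
  exact log_div_self_rpow_antitoneOn hr (hmem t ht) (hmem u hu) (by gcongr)

lemma powLogWeight_monotoneOn (hp : 0 < p) (hpq : p ≤ q) :
    MonotoneOn (powLogWeight p q) (Ici (exp (q / p - 1))) := by
  have hq : 0 < q := hp.trans_le hpq
  have hone : ∀ t ∈ Ici (exp (q / p - 1)), 1 ≤ t := fun t ht =>
    (one_le_exp (by rw [sub_nonneg, one_le_div hp]; exact hpq)).trans ht
  have hrepr : ∀ t, 1 ≤ t → powLogWeight p q t = (((1 + log t) / t ^ (p / q))⁻¹) ^ q := by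
    intro t ht
    have hlog : 0 ≤ log t := log_nonneg ht
    rw [powLogWeight, max_eq_left hlog, inv_div, div_rpow (by positivity) (by positivity),
      ← rpow_mul (by positivity), div_mul_cancel₀ _ hq.ne']
  intro t ht u hu htu
  have hanti := antitoneOn_one_add_log_div_rpow (div_pos hp hq) (by rwa [inv_div])
    (by rwa [inv_div]) htu
  have hpos : ∀ x ∈ Ici (exp (q / p - 1)), 0 < (1 + log x) / x ^ (p / q) := fun x hx =>
    div_pos (by linarith [log_nonneg (hone x hx)])
      (rpow_pos_of_pos (one_pos.trans_le (hone x hx)) _)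
  rw [hrepr t (hone t ht), hrepr u (hone u hu)]
  exact rpow_le_rpow (inv_nonneg.2 (hpos t ht).le) (inv_anti₀ (hpos u hu) hanti) hq.le

lemma powLogWeight_mul_min_rpow_le (hp : 0 < p) (hpq : p ≤ q) (ht : 0 ≤ t) (hs : 0 ≤ s) :
    powLogWeight p q t * min s 1 ^ p ≤ exp (q / p - 1) ^ p + powLogWeight p q (t * s) := by
  have hq : 0 ≤ q := hp.le.trans hpq
  rcases le_total s 1 with hs1 | hs1
  · rw [min_eq_left hs1, mul_comm]
    exact (rpow_mul_powLogWeight_le_powLogWeight_mul hq ht hs hs1).trans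
      (le_add_of_nonneg_left (by positivity))
  rw [min_eq_right hs1, one_rpow, mul_one]
  have hts : t ≤ t * s := le_mul_of_one_le_right ht hs1
  rcases le_total t (exp (q / p - 1)) with htT | hTt
  · calc powLogWeight p q t ≤ t ^ p := powLogWeight_le_rpow hq ht
      _ ≤ exp (q / p - 1) ^ p := by gcongr
      _ ≤ _ := le_add_of_nonneg_right (powLogWeight_nonneg (mul_nonneg ht hs))
  · exact (powLogWeight_monotoneOn hp hpq hTt (hTt.trans hts) hts).trans
      (le_add_of_nonneg_left (by positivity))

end powLogWeight

lemma min_abs_one_rpow_eq_zero_iff {x p : ℝ} (hp : p ≠ 0) : min |x| 1 ^ p = 0 ↔ x = 0 := by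
  rw [rpow_eq_zero (le_min (abs_nonneg x) zero_le_one) hp, min_eq_iff]
  simp +contextual

/-- Lemma 6.4 deduction: moment finiteness transfers from the product `X X'`
to the single factor `X`. -/
theorem stmt_4 {Ω : Type*} [MeasureSpace Ω] [IsProbabilityMeasure (ℙ : Measure Ω)]
    (X X' : Ω → ℝ) (hX : Measurable X) (hX' : Measurable X')
    (hindep : IndepFun X X' ℙ) (hid : Measure.map X ℙ = Measure.map X' ℙ)
    (hvar : ∫ ω, (X ω) ^ 2 ∂ℙ = 1)
    (α : ℝ) (hα : 0 < α)
    (hmom : Integrable (fun ω =>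
      |X ω * X' ω| ^ (2 + 4 * α) / (1 + max (Real.log |X ω * X' ω|) 0) ^ (4 + 4 * α)) ℙ) :
    Integrable (fun ω =>
      |X ω| ^ (2 + 4 * α) / (1 + max (Real.log |X ω|) 0) ^ (4 + 4 * α)) ℙ := by
  set p := 2 + 4 * α
  set q := 4 + 4 * α
  have hp : 0 < p := by linarith
  have hpq : p ≤ q := by linarith
  have hX'_sq : ∫ ω, X' ω ^ 2 = 1 := hvar ▸
    ((IdentDistrib.mk hX.aemeasurable hX'.aemeasurable hid).comp
      (measurable_id.pow_const 2)).integral_eq.symm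
  have hX'_ne : ¬ (fun ω => min |X' ω| 1 ^ p) =ᵐ[ℙ] 0 := fun h0 => by
    refine one_ne_zero (hX'_sq.symm.trans (integral_eq_zero_of_ae ?_))
    filter_upwards [h0] with ω hω
    simp [(min_abs_one_rpow_eq_zero_iff hp.ne').1 hω]
  have hW : Measurable fun t : ℝ => powLogWeight p q |t| :=
    measurable_powLogWeight.comp measurable_abs
  have hg : Measurable fun s : ℝ => min |s| 1 ^ p :=
    (measurable_abs.min measurable_const).pow_const p
  have hbound : Integrable (fun ω => powLogWeight p q |X ω| * min |X' ω| 1 ^ p) ℙ := by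
    refine ((integrable_const (exp (q / p - 1) ^ p)).add hmom).mono'
      ((hW.comp hX).mul (hg.comp hX')).aestronglyMeasurable (ae_of_all _ fun ω => ?_)
    rw [norm_of_nonneg (mul_nonneg (powLogWeight_nonneg (abs_nonneg _)) (by positivity))]
    show _ ≤ exp (q / p - 1) ^ p + powLogWeight p q |X ω * X' ω|
    rw [abs_mul]
    exact powLogWeight_mul_min_rpow_le hp hpq (abs_nonneg _) (abs_nonneg _)
  exact (hindep.comp hW hg).integrable_left_of_integrable_op (· * ·) 1 one_ne_zero
    (by simp [enorm_mul]) hbound (hW.comp hX).aestronglyMeasurable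
    (hg.comp hX').aestronglyMeasurable hX'_ne
end

section
/- Let A be an n × p real matrix with unit-norm columns, G = AᵀA, and M = max_{i≠j} |G(i,j)|. If a vector x ∈ R^p has fewer than (1 + M^{-1})/2 nonzero entries and b = Ax, then x is the unique solution of min ‖z‖₁ subject to Az = b, and also the unique solution of min ‖z‖₀ subject to Az = b. -/
open Finset Matrix

/-- Chen–Huo equivalence: if `x` has fewer than `(1 + M⁻¹)/2` nonzeros, where `M`
is the mutual coherence of the unit-column matrix `A`, then `x` is the unique
minimizer of both the `ℓ₁` norm and the `ℓ₀` "norm" subject to `Az = Ax`. -/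
theorem stmt_10 (n p : ℕ) (A : Matrix (Fin n) (Fin p) ℝ)
    (hcols : ∀ j, ∑ i, (A i j) ^ 2 = 1)
    (M : ℝ)
    (hM : IsGreatest {m : ℝ | ∃ i j : Fin p, i ≠ j ∧ m = |(Aᵀ * A) i j|} M)
    (x : Fin p → ℝ)
    (hsparse : ((Finset.univ.filter (fun j => x j ≠ 0)).card : ℝ) < (1 + M⁻¹) / 2) :
    ∀ z : Fin p → ℝ, A.mulVec z = A.mulVec x → z ≠ x →
      (∑ j, |x j| < ∑ j, |z j|) ∧
      (Finset.univ.filter (fun j => x j ≠ 0)).card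
        < (Finset.univ.filter (fun j => z j ≠ 0)).card := by
  have hMnonneg : 0 ≤ M := by
    obtain ⟨i, j, hij, hMe⟩ := hM.1
    rw [hMe]; exact abs_nonneg _
  have hG : ∀ i j : Fin p, i ≠ j → |(Aᵀ * A) i j| ≤ M := fun i j hij =>
    hM.2 ⟨i, j, hij, rfl⟩
  have hGdiag : ∀ j, (Aᵀ * A) j j = 1 := by
    intro j
    simp only [Matrix.mul_apply, Matrix.transpose_apply]
    simpa [sq] using hcols j
  intro z hAz hzx
  set S : ℝ := ∑ i, |z i - x i| with hSdef
  obtain ⟨j₀, hj₀⟩ : ∃ j, z j ≠ x j := Function.ne_iff.mp hzx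
  have hSpos : 0 < S :=
    Finset.sum_pos' (fun i _ => abs_nonneg _)
      ⟨j₀, Finset.mem_univ j₀, abs_pos.mpr (sub_ne_zero.mpr hj₀)⟩
  have hker : A.mulVec (z - x) = 0 := by
    rw [Matrix.mulVec_sub, hAz, sub_self]
  have hker2 : (Aᵀ * A).mulVec (z - x) = 0 := by
    rw [← Matrix.mulVec_mulVec, hker, Matrix.mulVec_zero]
  have key : ∀ j, |z j - x j| * (1 + M) ≤ M * S := by
    intro j
    have h0 : ∑ i, (Aᵀ * A) j i * (z - x) i = 0 := congrFun hker2 j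
    rw [← Finset.add_sum_erase _ _ (Finset.mem_univ j), hGdiag j, one_mul] at h0
    have hzx' : (z - x) j = z j - x j := rfl
    have habs : |z j - x j| ≤ ∑ i ∈ Finset.univ.erase j, M * |z i - x i| := by
      have heq : z j - x j = -∑ i ∈ Finset.univ.erase j, (Aᵀ * A) j i * (z - x) i := by
        rw [← hzx']; linarith
      rw [heq, abs_neg]
      refine (Finset.abs_sum_le_sum_abs _ _).trans (Finset.sum_le_sum ?_)
      intro i hi
      rw [abs_mul]
      have : (z - x) i = z i - x i := rfl
      rw [this]
      exact mul_le_mul_of_nonneg_right (hG j i (Finset.ne_of_mem_erase hi).symm)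
        (abs_nonneg _)
    rw [← Finset.mul_sum, Finset.sum_erase_eq_sub (Finset.mem_univ j)] at habs
    have := habs
    nlinarith [abs_nonneg (z j - x j)]
  have hMpos : 0 < M := by
    rcases hMnonneg.lt_or_eq with h | h
    · exact h
    · exfalso
      have hk := key j₀
      rw [← h] at hk
      simp only [add_zero, mul_one, zero_mul] at hk
      have := abs_pos.mpr (sub_ne_zero.mpr hj₀)
      linarith
  set T := Finset.univ.filter (fun j => x j ≠ 0) with hT
  set Z := Finset.univ.filter (fun j => z j ≠ 0) with hZ
  set H := Finset.univ.filter (fun j => z j - x j ≠ 0) with hH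
  -- sum over support of h equals S
  have hsum_supp : ∑ j ∈ H, |z j - x j| = S := by
    rw [hSdef]
    refine Finset.sum_subset (Finset.filter_subset _ _) ?_
    intro i _ hi
    simp only [hH, Finset.mem_filter, Finset.mem_univ, true_and, not_not] at hi
    simp [hi]
  -- ℓ₀ spark bound : (1+M) ≤ H.card * M
  have hHcard : (1 + M) ≤ (H.card : ℝ) * M := by
    have h1 : S * (1 + M) ≤ (H.card : ℝ) * (M * S) := by
      calc S * (1 + M) = ∑ j ∈ H, |z j - x j| * (1 + M) := by
            rw [← Finset.sum_mul, hsum_supp]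
        _ ≤ ∑ _j ∈ H, M * S := Finset.sum_le_sum fun j _ => key j
        _ = (H.card : ℝ) * (M * S) := by rw [Finset.sum_const, nsmul_eq_mul]
    nlinarith
  -- sum over T bound
  have hTsum : (∑ j ∈ T, |z j - x j|) * (1 + M) < (1 + M) / 2 * S := by
    have h1 : (∑ j ∈ T, |z j - x j|) * (1 + M) ≤ (T.card : ℝ) * (M * S) := by
      calc (∑ j ∈ T, |z j - x j|) * (1 + M)
          = ∑ j ∈ T, |z j - x j| * (1 + M) := by rw [Finset.sum_mul]
        _ ≤ ∑ _j ∈ T, M * S := Finset.sum_le_sum fun j _ => key j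
        _ = (T.card : ℝ) * (M * S) := by rw [Finset.sum_const, nsmul_eq_mul]
    have h2 : (T.card : ℝ) * (M * S) < (1 + M⁻¹) / 2 * (M * S) :=
      mul_lt_mul_of_pos_right hsparse (mul_pos hMpos hSpos)
    have h3 : (1 + M⁻¹) / 2 * (M * S) = (1 + M) / 2 * S := by
      field_simp; ring
    linarith
  have hTsum' : ∑ j ∈ T, |z j - x j| < S / 2 := by
    have h1M : 0 < 1 + M := by linarith
    nlinarith
  constructor
  · -- ℓ₁ part
    have e1 : ∑ j ∈ T, |x j| = ∑ j, |x j| := by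
      refine Finset.sum_subset (Finset.filter_subset _ _) ?_
      intro i _ hi
      simp only [hT, Finset.mem_filter, Finset.mem_univ, true_and, not_not] at hi
      simp [hi]
    have e2 : ∑ j ∈ T, |z j| + ∑ j ∈ Tᶜ, |z j| = ∑ j, |z j| :=
      Finset.sum_add_sum_compl T _
    have e3 : ∑ j ∈ Tᶜ, |z j| = ∑ j ∈ Tᶜ, |z j - x j| := by
      refine Finset.sum_congr rfl ?_
      intro i hi
      simp only [hT, Finset.mem_compl, Finset.mem_filter, Finset.mem_univ, true_and,
        not_not] at hi
      rw [hi, sub_zero]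
    have e4 : ∑ j ∈ T, |z j - x j| + ∑ j ∈ Tᶜ, |z j - x j| = S :=
      Finset.sum_add_sum_compl T _
    have e5 : ∑ j ∈ T, (|x j| - |z j - x j|) ≤ ∑ j ∈ T, |z j| := by
      refine Finset.sum_le_sum ?_
      intro i _
      have h1 := abs_add_le (z i) (x i - z i)
      have h2 : z i + (x i - z i) = x i := by ring
      rw [h2, abs_sub_comm (x i) (z i)] at h1
      linarith
    rw [Finset.sum_sub_distrib] at e5
    linarith
  · -- ℓ₀ part
    have hsubset : H ⊆ T ∪ Z := by
      intro i hi
      simp only [hH, Finset.mem_filter, Finset.mem_univ, true_and] at hi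
      simp only [hT, hZ, Finset.mem_union, Finset.mem_filter, Finset.mem_univ, true_and]
      by_contra hc
      push_neg at hc
      exact hi (by rw [hc.2, hc.1, sub_zero])
    have hcard : H.card ≤ T.card + Z.card :=
      (Finset.card_le_card hsubset).trans (Finset.card_union_le _ _)
    have hcardR : (H.card : ℝ) ≤ (T.card : ℝ) + (Z.card : ℝ) := by exact_mod_cast hcard
    have hHlow : (1 + M⁻¹) ≤ (H.card : ℝ) := by
      have h1 : (1 + M) / M ≤ (H.card : ℝ) := by
        rw [div_le_iff₀ hMpos]; linarith
      have heq : (1 + M) / M = 1 + M⁻¹ := by field_simp; ring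
      linarith [heq ▸ h1]
    have : (T.card : ℝ) < (Z.card : ℝ) := by linarith
    exact_mod_cast this
end

section
/- With λ_n = ((p²−p)/2) P(χ²(1) ≥ y_n²), y_n = √(4 log p − log log p + y) for fixed y and p → ∞, one has λ_n ≤ ((1 − p^{-1}) √(log p) / (√(2π) y_n)) e^{−y/2}, and consequently λ_n → (1/√(8π)) e^{−y/2} as p → ∞. -/
open MeasureTheory ProbabilityTheory Filter Real Set Topology

/-!
Integrating `x e^{-x²/2} ≥ t e^{-x²/2}` and `(1 - 3x⁻⁴) e^{-x²/2} ≤ e^{-x²/2}`, whose antiderivative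
is `(x⁻³ - x⁻¹) e^{-x²/2}`, over `(t, ∞)` gives the Mills ratio bounds
`(2 / (√(2π) t)) (1 - t⁻²) e^{-t²/2} ≤ P(X² ≥ t²) ≤ (2 / (√(2π) t)) e^{-t²/2}` for `X ~ N(0, 1)`.
For `t² = 4 log p - log log p + y` one has `e^{-t²/2} = p⁻² √(log p) e^{-y/2}`, so `(p² - p)/2`
times the upper bound is exactly the claimed bound on `λ_p`, and the lower bound differs from it by the
factor `1 - t⁻² → 1`. Since `√(log p) / t → 1/2`, both tend to `e^{-y/2} / √(8π)`.
-/

lemma integrable_exp_neg_sq_div_two : Integrable fun x : ℝ => exp (-x ^ 2 / 2) := by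
  simpa [neg_div, div_eq_inv_mul] using integrable_exp_neg_mul_sq (b := 1 / 2) (by norm_num)

lemma integrable_mul_exp_neg_sq_div_two : Integrable fun x : ℝ => x * exp (-x ^ 2 / 2) := by
  simpa [neg_div, div_eq_inv_mul] using integrable_mul_exp_neg_mul_sq (b := 1 / 2) (by norm_num)

lemma tendsto_exp_neg_sq_div_two_atTop :
    Tendsto (fun x : ℝ => exp (-x ^ 2 / 2)) atTop (𝓝 0) :=
  tendsto_exp_atBot.comp <|
    (tendsto_neg_atTop_atBot.comp (tendsto_pow_atTop two_ne_zero)).atBot_div_const two_pos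

lemma hasDerivAt_exp_neg_sq_div_two (x : ℝ) :
    HasDerivAt (fun x : ℝ => exp (-x ^ 2 / 2)) (-x * exp (-x ^ 2 / 2)) x := by
  convert ((hasDerivAt_pow 2 x).fun_neg.div_const 2).exp using 1
  ring

lemma integral_Ioi_mul_exp_neg_sq_div_two (t : ℝ) :
    ∫ x in Ioi t, x * exp (-x ^ 2 / 2) = exp (-t ^ 2 / 2) := by
  have := integral_Ioi_of_hasDerivAt_of_tendsto' (a := t) (f' := fun x => x * exp (-x ^ 2 / 2))
    (fun x _ => by simpa using (hasDerivAt_exp_neg_sq_div_two x).fun_neg)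
    integrable_mul_exp_neg_sq_div_two.integrableOn tendsto_exp_neg_sq_div_two_atTop.neg
  simpa using this

lemma integral_Ioi_exp_neg_sq_div_two_le {t : ℝ} (ht : 0 < t) :
    ∫ x in Ioi t, exp (-x ^ 2 / 2) ≤ t⁻¹ * exp (-t ^ 2 / 2) := by
  calc ∫ x in Ioi t, exp (-x ^ 2 / 2)
      ≤ ∫ x in Ioi t, t⁻¹ * (x * exp (-x ^ 2 / 2)) := by
        refine setIntegral_mono_on integrable_exp_neg_sq_div_two.integrableOn
          (integrable_mul_exp_neg_sq_div_two.const_mul _).integrableOn measurableSet_Ioi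
          fun x hx => ?_
        rw [← mul_assoc, inv_mul_eq_div]
        exact le_mul_of_one_le_left (exp_nonneg _) ((one_le_div ht).2 (le_of_lt hx))
    _ = t⁻¹ * exp (-t ^ 2 / 2) := by
        rw [integral_const_mul, integral_Ioi_mul_exp_neg_sq_div_two]

lemma hasDerivAt_mills_lower {x : ℝ} (hx : x ≠ 0) :
    HasDerivAt (fun x : ℝ => ((x ^ 3)⁻¹ - x⁻¹) * exp (-x ^ 2 / 2))
      ((1 - 3 * (x ^ 4)⁻¹) * exp (-x ^ 2 / 2)) x := by
  refine ((((hasDerivAt_pow 3 x).fun_inv (pow_ne_zero 3 hx)).fun_sub (hasDerivAt_inv hx)).fun_mul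
    (hasDerivAt_exp_neg_sq_div_two x)).congr_deriv ?_
  field_simp
  ring

lemma integrableOn_Ioi_mills_lower_deriv {t : ℝ} (ht : 0 < t) :
    IntegrableOn (fun x : ℝ => (1 - 3 * (x ^ 4)⁻¹) * exp (-x ^ 2 / 2)) (Ioi t) := by
  refine integrable_exp_neg_sq_div_two.integrableOn.bdd_mul (c := 1 + 3 * (t ^ 4)⁻¹)
    (by fun_prop) ?_
  filter_upwards [ae_restrict_mem measurableSet_Ioi] with x hx
  have hx4 : (x ^ 4)⁻¹ ≤ (t ^ 4)⁻¹ := by gcongr; exact le_of_lt hx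
  have : 0 < (x ^ 4)⁻¹ := by have := ht.trans hx; positivity
  rw [norm_eq_abs, abs_le]
  constructor <;> linarith

lemma le_integral_Ioi_exp_neg_sq_div_two {t : ℝ} (ht : 0 < t) :
    t⁻¹ * (1 - (t ^ 2)⁻¹) * exp (-t ^ 2 / 2) ≤ ∫ x in Ioi t, exp (-x ^ 2 / 2) := by
  have hlim : Tendsto (fun x : ℝ => ((x ^ 3)⁻¹ - x⁻¹) * exp (-x ^ 2 / 2)) atTop (𝓝 0) := by
    simpa using ((tendsto_pow_atTop three_ne_zero).inv_tendsto_atTop.sub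
      tendsto_inv_atTop_zero).mul tendsto_exp_neg_sq_div_two_atTop
  have hint := integral_Ioi_of_hasDerivAt_of_tendsto'
    (fun x hx => hasDerivAt_mills_lower (ht.trans_le hx).ne')
    (integrableOn_Ioi_mills_lower_deriv ht) hlim
  calc t⁻¹ * (1 - (t ^ 2)⁻¹) * exp (-t ^ 2 / 2)
      = ∫ x in Ioi t, (1 - 3 * (x ^ 4)⁻¹) * exp (-x ^ 2 / 2) := by
        rw [hint]; field_simp; ring
    _ ≤ ∫ x in Ioi t, exp (-x ^ 2 / 2) := by
        refine setIntegral_mono_on (integrableOn_Ioi_mills_lower_deriv ht)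
          integrable_exp_neg_sq_div_two.integrableOn measurableSet_Ioi fun x hx => ?_
        have : 0 < (x ^ 4)⁻¹ := by have := ht.trans hx; positivity
        exact mul_le_of_le_one_left (exp_nonneg _) (by linarith)

lemma gaussianReal_sq_tail_eq {t : ℝ} (ht : 0 < t) :
    (gaussianReal 0 1 {x | t ^ 2 ≤ x ^ 2}).toReal
      = 2 / √(2 * π) * ∫ x in Ioi t, exp (-x ^ 2 / 2) := by
  have hset : {x : ℝ | t ^ 2 ≤ x ^ 2} = Iic (-t) ∪ Ici t := by
    ext x
    simp only [mem_ofPred_eq, mem_union, mem_Iic, mem_Ici, sq_le_sq, abs_of_pos ht, le_abs']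
  have hpdf : gaussianPDFReal 0 1 = fun x => (√(2 * π))⁻¹ * exp (-x ^ 2 / 2) := by
    ext x; simp [gaussianPDFReal]
  have hint := integrable_gaussianPDFReal 0 1
  rw [hset, gaussianReal_apply_eq_integral 0 one_ne_zero,
    ENNReal.toReal_ofReal (setIntegral_nonneg (measurableSet_Iic.union measurableSet_Ici)
      fun x _ => gaussianPDFReal_nonneg _ _ _),
    setIntegral_union (Iic_disjoint_Ici.2 (by linarith)) measurableSet_Ici hint.integrableOn
      hint.integrableOn, ← integral_comp_neg_Ioi, integral_Ici_eq_integral_Ioi, hpdf]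
  simp only [neg_sq, integral_const_mul]
  ring

lemma gaussianReal_sq_tail_le {t : ℝ} (ht : 0 < t) :
    (gaussianReal 0 1 {x | t ^ 2 ≤ x ^ 2}).toReal ≤ 2 / (√(2 * π) * t) * exp (-t ^ 2 / 2) := by
  rw [gaussianReal_sq_tail_eq ht]
  calc 2 / √(2 * π) * ∫ x in Ioi t, exp (-x ^ 2 / 2)
      ≤ 2 / √(2 * π) * (t⁻¹ * exp (-t ^ 2 / 2)) := by
        gcongr; exact integral_Ioi_exp_neg_sq_div_two_le ht
    _ = 2 / (√(2 * π) * t) * exp (-t ^ 2 / 2) := by field_simp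

lemma le_gaussianReal_sq_tail {t : ℝ} (ht : 0 < t) :
    2 / (√(2 * π) * t) * (1 - (t ^ 2)⁻¹) * exp (-t ^ 2 / 2)
      ≤ (gaussianReal 0 1 {x | t ^ 2 ≤ x ^ 2}).toReal := by
  rw [gaussianReal_sq_tail_eq ht]
  calc 2 / (√(2 * π) * t) * (1 - (t ^ 2)⁻¹) * exp (-t ^ 2 / 2)
      = 2 / √(2 * π) * (t⁻¹ * (1 - (t ^ 2)⁻¹) * exp (-t ^ 2 / 2)) := by field_simp
    _ ≤ 2 / √(2 * π) * ∫ x in Ioi t, exp (-x ^ 2 / 2) := by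
        gcongr; exact le_integral_Ioi_exp_neg_sq_div_two ht

/-- `threshold y (log p)` is the paper's `y_n²`. -/
noncomputable def threshold (y u : ℝ) : ℝ := 4 * u - log u + y

lemma tendsto_threshold_div_self (y : ℝ) :
    Tendsto (fun u => threshold y u / u) atTop (𝓝 4) := by
  have h : Tendsto (fun u => 4 - log u / u + y / u) atTop (𝓝 (4 - 0 + 0)) :=
    (tendsto_const_nhds.sub isLittleO_log_id_atTop.tendsto_div_nhds_zero).add
      (tendsto_const_nhds.div_atTop tendsto_id)
  rw [sub_zero, add_zero] at h
  refine h.congr' ?_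
  filter_upwards [eventually_ne_atTop 0] with u hu
  simp only [threshold]
  field_simp

lemma tendsto_threshold_atTop (y : ℝ) : Tendsto (threshold y) atTop atTop := by
  refine (tendsto_id.atTop_mul_pos four_pos (tendsto_threshold_div_self y)).congr' ?_
  filter_upwards [eventually_ne_atTop 0] with u hu
  exact mul_div_cancel₀ _ hu

lemma tendsto_sqrt_div_sqrt_threshold (y : ℝ) :
    Tendsto (fun u => √u / √(threshold y u)) atTop (𝓝 (1 / 2)) := by
  have h := ((tendsto_threshold_div_self y).inv₀ four_ne_zero).sqrt
  rw [show (4⁻¹ : ℝ) = (1 / 2) ^ 2 by norm_num, sqrt_sq (by norm_num)] at h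
  refine h.congr' ?_
  filter_upwards [eventually_ge_atTop 0] with u hu
  rw [inv_div, sqrt_div hu]

lemma exp_neg_threshold_log_div_two (y : ℝ) {p : ℝ} (hp : 1 < p) :
    exp (-threshold y (log p) / 2) = (p ^ 2)⁻¹ * √(log p) * exp (-y / 2) := by
  have hL : 0 < log p := log_pos hp
  rw [sqrt_eq_rpow, rpow_def_of_pos hL, ← exp_log (by positivity : (0 : ℝ) < (p ^ 2)⁻¹),
    ← exp_add, ← exp_add, log_inv, log_pow]
  congr 1
  simp only [threshold]
  push_cast
  ring

noncomputable def lambdaBound (y p : ℝ) : ℝ :=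
  (1 - p⁻¹) * √(log p) / (√(2 * π) * √(threshold y (log p))) * exp (-y / 2)

lemma choose_two_mul_tail_bound_eq_lambdaBound (y : ℝ) {p : ℝ} (hp : 1 < p)
    (hA : 0 < threshold y (log p)) :
    (p ^ 2 - p) / 2 * (2 / (√(2 * π) * √(threshold y (log p)))
      * exp (-√(threshold y (log p)) ^ 2 / 2)) = lambdaBound y p := by
  rw [sq_sqrt hA.le, exp_neg_threshold_log_div_two y hp, lambdaBound]
  have : 0 < √(threshold y (log p)) := sqrt_pos.2 hA
  field_simp

lemma choose_two_mul_tail_mem_Icc (y : ℝ) {p : ℝ} (hp : 1 < p)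
    (hA : 0 < threshold y (log p)) :
    (p ^ 2 - p) / 2 * (gaussianReal 0 1 {x | √(threshold y (log p)) ^ 2 ≤ x ^ 2}).toReal
      ∈ Icc (lambdaBound y p * (1 - (threshold y (log p))⁻¹)) (lambdaBound y p) := by
  have ht : 0 < √(threshold y (log p)) := sqrt_pos.2 hA
  have hpairs : 0 ≤ (p ^ 2 - p) / 2 := by nlinarith
  rw [← choose_two_mul_tail_bound_eq_lambdaBound y hp hA]
  constructor
  · calc _ = (p ^ 2 - p) / 2 * (2 / (√(2 * π) * √(threshold y (log p)))
          * (1 - (√(threshold y (log p)) ^ 2)⁻¹) * exp (-√(threshold y (log p)) ^ 2 / 2)) := by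
          rw [sq_sqrt hA.le]; ring
      _ ≤ _ := by gcongr; exact le_gaussianReal_sq_tail ht
  · gcongr; exact gaussianReal_sq_tail_le ht

lemma tendsto_lambdaBound (y : ℝ) :
    Tendsto (fun p : ℕ => lambdaBound y p) atTop (𝓝 (1 / √(8 * π) * exp (-y / 2))) := by
  have hlog : Tendsto (fun p : ℕ => log (p : ℝ)) atTop atTop :=
    tendsto_log_atTop.comp tendsto_natCast_atTop_atTop
  have hp : Tendsto (fun p : ℕ => 1 - (p : ℝ)⁻¹) atTop (𝓝 (1 - 0)) :=
    tendsto_const_nhds.sub (tendsto_inv_atTop_zero.comp tendsto_natCast_atTop_atTop)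
  have h := (hp.mul
    ((tendsto_sqrt_div_sqrt_threshold y).comp hlog)).mul_const ((√(2 * π))⁻¹ * exp (-y / 2))
  have h8 : √(8 * π) = 2 * √(2 * π) := by
    rw [show (8 : ℝ) * π = 2 ^ 2 * (2 * π) by ring, sqrt_mul (by positivity), sqrt_sq zero_le_two]
  rw [show 1 / √(8 * π) * exp (-y / 2) = (1 - 0) * (1 / 2) * ((√(2 * π))⁻¹ * exp (-y / 2)) by
    rw [h8]; ring]
  refine h.congr fun p => ?_
  simp only [lambdaBound, Function.comp]
  field_simp

/-- Computation in the proof of (1.11): the bound on `λ_n` and its limit as `p → ∞`. -/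
theorem stmt_12 (y : ℝ)
    (lam : ℕ → ℝ)
    (hlam : ∀ p : ℕ, lam p = (((p : ℝ) ^ 2 - p) / 2) *
      ((gaussianReal 0 1) {x | Real.sqrt (4 * Real.log p - Real.log (Real.log p) + y) ^ 2
          ≤ x ^ 2}).toReal) :
    (∀ᶠ p : ℕ in atTop,
      lam p ≤ (1 - (p : ℝ)⁻¹) * Real.sqrt (Real.log p)
          / (Real.sqrt (2 * π) * Real.sqrt (4 * Real.log p - Real.log (Real.log p) + y))
          * Real.exp (-y / 2)) ∧
    Tendsto lam atTop (nhds ((1 / Real.sqrt (8 * π)) * Real.exp (-y / 2))) := by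
  have hA : Tendsto (fun p : ℕ => threshold y (log p)) atTop atTop :=
    (tendsto_threshold_atTop y).comp (tendsto_log_atTop.comp tendsto_natCast_atTop_atTop)
  have hbounds : ∀ᶠ p : ℕ in atTop,
      lam p ∈ Icc (lambdaBound y p * (1 - (threshold y (log p))⁻¹)) (lambdaBound y p) := by
    filter_upwards [(tendsto_natCast_atTop_atTop (R := ℝ)).eventually_gt_atTop 1,
      hA.eventually_gt_atTop 0] with p hp hAp
    rw [hlam p]
    exact choose_two_mul_tail_mem_Icc y hp hAp
  have hlower : Tendsto (fun p : ℕ => lambdaBound y p * (1 - (threshold y (log p))⁻¹)) atTop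
      (𝓝 (1 / √(8 * π) * exp (-y / 2))) := by
    simpa using
      (tendsto_lambdaBound y).mul (tendsto_const_nhds (x := (1 : ℝ)).sub hA.inv_tendsto_atTop)
  exact ⟨hbounds.mono fun _ h => h.2, tendsto_of_tendsto_of_tendsto_of_le_of_le' hlower
    (tendsto_lambdaBound y) (hbounds.mono fun _ h => h.1) (hbounds.mono fun _ h => h.2)⟩
end
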